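/- Let p, q be positive integers and α : (ZMod p) × (ZMod q) → ℝ a probability distribution with α(0,0) = 0, α ≥ 0, Σ α = 1, and suppose the support {(i,j) : α(i,j) > 0} generates the group (ZMod p) × (ZMod q). Let L_*(x) = Σ_{(i,j)} α(-i,-j) (J_p^i ⊗ J_q^j) x (J_p^i ⊗ J_q^j)* − x on the complex matrices indexed by (ZMod p) × (ZMod q). Then a matrix ρ satisfies L_*(ρ) = 0 if and only if ρ lies in the linear span of {J_p^i ⊗ J_q^j : (i,j) ∈ (ZMod p) × (ZMod q)}; moreover, if in addition tr(ρ) = 1, then the coefficient of the identity I = J_p^0 ⊗ J_q^0 in this expansion equals 1/(pq). In particular every invariant state of the circulant semigroup has the form ρ = (1/(pq)) I + Σ_{(i,j) ≠ (0,0)} ρ_{ij} J_p^i ⊗ J_q^j. -/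

import Mathlib

open Matrix Kronecker

noncomputable section

/-- The primary permutation (left-shift) matrix `J_p`. -/
def Jmat (p : ℕ) : Matrix (ZMod p) (ZMod p) ℂ :=
  Matrix.of fun i j => if j = i + 1 then 1 else 0

/-- The Kraus operator `J_p^i ⊗ J_q^j`. -/
def Kr (p q : ℕ) [NeZero p] [NeZero q] (i : ZMod p) (j : ZMod q) :
    Matrix (ZMod p × ZMod q) (ZMod p × ZMod q) ℂ :=
  (Jmat p ^ i.val) ⊗ₖ (Jmat q ^ j.val)

/-- The predual circulant GKSL generator `L_*` associated with `α`. -/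
def LStar (p q : ℕ) [NeZero p] [NeZero q] (α : ZMod p × ZMod q → ℝ)
    (x : Matrix (ZMod p × ZMod q) (ZMod p × ZMod q) ℂ) :
    Matrix (ZMod p × ZMod q) (ZMod p × ZMod q) ℂ :=
  (∑ ij : ZMod p × ZMod q,
    (α (-ij.1, -ij.2) : ℂ) • (Kr p q ij.1 ij.2 * x * (Kr p q ij.1 ij.2)ᴴ)) - x

/-!
Entrywise, `L_*(ρ) = 0` says `ρ u v = ∑_g α g ρ (u - g) (v - g)`, so along each diagonal the
function `w ↦ ρ w (w + d)` is harmonic for the random walk on `ZMod p × ZMod q` with step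
law `α`.
Since the support of `α` generates this finite group, the maximum principle forces harmonic
functions to be constant. Hence `ρ u v` depends only on `v - u`, which says exactly that `ρ` is a
combination of the translation matrices `J_p^i ⊗ J_q^j`, each of which is invariant; the common
diagonal entry of such a `ρ` is `tr ρ / (p q)`.
-/

section Harmonic

variable {G E : Type*} [AddCommGroup G] [Fintype G] [AddCommGroup E] [Module ℝ E]

def IsHarmonic (α : G → ℝ) (f : G → E) : Prop :=
  ∀ v, ∑ g, α g • f (v - g) = f v

theorem IsHarmonic.map {F : Type*} [AddCommGroup F] [Module ℝ F] {α : G → ℝ} {f : G → E}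
    (hf : IsHarmonic α f) (L : E →ₗ[ℝ] F) : IsHarmonic α (L ∘ f) := fun v => by
  simp only [Function.comp_apply, ← map_smul, ← map_sum, hf v]

variable {α : G → ℝ}

theorem IsHarmonic.apply_eq_apply_real (hα : ∀ g, 0 ≤ α g) (hsum : ∑ g, α g = 1)
    (hgen : AddSubgroup.closure {g | 0 < α g} = ⊤) {f : G → ℝ} (hf : IsHarmonic α f)
    (v w : G) : f v = f w := by
  obtain ⟨v₀, -, hmax⟩ := Finset.exists_max_image Finset.univ f Finset.univ_nonempty
  -- an `α`-average of values `≤ f v₀` equals `f v₀` only if each term of positive weight does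
  have step : ∀ g, 0 < α g → ∀ u, f u = f v₀ → f (u - g) = f v₀ := by
    intro g hg u hu
    have hzero : ∑ g', α g' * (f v₀ - f (u - g')) = 0 := by
      have := hf u
      simp only [smul_eq_mul] at this
      simp only [mul_sub, Finset.sum_sub_distrib, ← Finset.sum_mul, hsum, one_mul, this, hu,
        sub_self]
    have hterm := (Finset.sum_eq_zero_iff_of_nonneg fun g' _ =>
      mul_nonneg (hα g') (sub_nonneg.2 (hmax _ (Finset.mem_univ _)))).1 hzero g
      (Finset.mem_univ g)
    linarith [sub_eq_zero.1 ((mul_eq_zero.1 hterm).resolve_left hg.ne')]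
  have hclosure : ∀ g ∈ AddSubmonoid.closure {g | 0 < α g}, ∀ u, f u = f v₀ →
      f (u - g) = f v₀ := by
    intro g hg
    induction hg using AddSubmonoid.closure_induction with
    | mem g hg => exact step g hg
    | zero => simp
    | add g₁ g₂ _ _ ih₁ ih₂ =>
      intro u hu
      rw [sub_add_eq_sub_sub]
      exact ih₂ _ (ih₁ _ hu)
  have hall : ∀ x, f x = f v₀ := fun x => by
    have hx : v₀ - x ∈ AddSubmonoid.closure {g | 0 < α g} := by
      rw [← AddSubgroup.closure_toAddSubmonoid_of_finite, hgen]
      trivial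
    simpa using hclosure _ hx v₀ rfl
  rw [hall v, hall w]

theorem IsHarmonic.apply_eq_apply (hα : ∀ g, 0 ≤ α g) (hsum : ∑ g, α g = 1)
    (hgen : AddSubgroup.closure {g | 0 < α g} = ⊤) {f : G → E} (hf : IsHarmonic α f)
    (v w : G) : f v = f w := by
  rw [← sub_eq_zero, ← Module.forall_dual_apply_eq_zero_iff ℝ]
  intro φ
  rw [map_sub, sub_eq_zero]
  exact (hf.map φ).apply_eq_apply_real hα hsum hgen v w

end Harmonic

section ShiftMatrix

variable {G : Type*} [AddCommGroup G] [Fintype G]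

theorem trace_eq_card_mul_apply_zero_zero {x : Matrix G G ℂ}
    (hx : ∀ u v, x u v = x 0 (v - u)) : trace x = Fintype.card G * x 0 0 := by
  simp [trace, hx _ _]

variable [DecidableEq G]

def shiftMatrix (g : G) : Matrix G G ℂ :=
  of fun u v => if v = u + g then 1 else 0

theorem sum_smul_shiftMatrix_apply (c : G → ℂ) (u v : G) :
    (∑ g, c g • shiftMatrix g) u v = c (v - u) := by
  have hshift : ∀ g, v = u + g ↔ g = v - u := fun g => by rw [eq_sub_iff_add_eq', eq_comm]
  simp [Matrix.sum_apply, shiftMatrix, hshift]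

theorem eq_sum_smul_shiftMatrix {x : Matrix G G ℂ} (hx : ∀ u v, x u v = x 0 (v - u)) :
    x = ∑ g, x 0 g • shiftMatrix g :=
  ext fun u v => by rw [sum_smul_shiftMatrix_apply, hx]

theorem mem_span_shiftMatrix_iff {x : Matrix G G ℂ} :
    x ∈ Submodule.span ℂ (Set.range shiftMatrix) ↔ ∀ u v, x u v = x 0 (v - u) := by
  constructor
  · rintro hx u v
    obtain ⟨c, rfl⟩ := (Submodule.mem_span_range_iff_exists_fun ℂ).1 hx
    simp only [sum_smul_shiftMatrix_apply, sub_zero]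
  · intro hx
    exact (Submodule.mem_span_range_iff_exists_fun ℂ).2 ⟨_, (eq_sum_smul_shiftMatrix hx).symm⟩

theorem shiftMatrix_mul_mul_conjTranspose_apply (g : G) (x : Matrix G G ℂ) (u v : G) :
    (shiftMatrix g * x * (shiftMatrix g)ᴴ) u v = x (u + g) (v + g) := by
  simp [Matrix.mul_apply, shiftMatrix, apply_ite (star : ℂ → ℂ), ite_mul, mul_ite]

def shiftGenerator (α : G → ℝ) (x : Matrix G G ℂ) : Matrix G G ℂ :=
  ∑ g, (α (-g) : ℂ) • (shiftMatrix g * x * (shiftMatrix g)ᴴ) - x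

theorem shiftGenerator_apply (α : G → ℝ) (x : Matrix G G ℂ) (u v : G) :
    shiftGenerator α x u v = ∑ g, α g • x (u - g) (v - g) - x u v := by
  simp only [shiftGenerator, Matrix.sub_apply, Matrix.sum_apply, Matrix.smul_apply,
    shiftMatrix_mul_mul_conjTranspose_apply]
  congr 1
  exact Fintype.sum_equiv (Equiv.neg G) _ _ fun g => by simp [sub_eq_add_neg, Complex.real_smul]

theorem shiftGenerator_eq_zero_iff {α : G → ℝ} (hα : ∀ g, 0 ≤ α g)
    (hsum : ∑ g, α g = 1) (hgen : AddSubgroup.closure {g | 0 < α g} = ⊤) {x : Matrix G G ℂ} :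
    shiftGenerator α x = 0 ↔ ∀ u v, x u v = x 0 (v - u) := by
  constructor
  · intro hx u v
    have hharm : IsHarmonic α fun w => x w (w + (v - u)) := fun w => by
      have := congrFun₂ hx w (w + (v - u))
      rw [shiftGenerator_apply, Matrix.zero_apply, sub_eq_zero] at this
      simpa only [sub_add_eq_add_sub] using this
    simpa using hharm.apply_eq_apply hα hsum hgen u 0
  · intro hx
    ext u v
    have hshift : ∀ g, x (u - g) (v - g) = x u v := fun g => by
      rw [hx, hx u, sub_sub_sub_cancel_right]
    simp only [shiftGenerator_apply, hshift, ← Finset.sum_smul, hsum, one_smul, sub_self,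
      Matrix.zero_apply]

end ShiftMatrix

theorem Jmat_pow_apply (p k : ℕ) [NeZero p] (a b : ZMod p) :
    (Jmat p ^ k) a b = if b = a + k then 1 else 0 := by
  induction k generalizing a b with
  | zero => simp [one_apply, eq_comm]
  | succ k ih =>
    simp only [pow_succ, mul_apply, ih, ite_mul, one_mul, zero_mul, Finset.sum_ite_eq',
      Finset.mem_univ, if_true]
    simp [Jmat, add_assoc]

theorem Kr_eq_shiftMatrix (p q : ℕ) [NeZero p] [NeZero q] (i : ZMod p) (j : ZMod q) :
    Kr p q i j = shiftMatrix (i, j) := by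
  ext ⟨a, b⟩ ⟨c, d⟩
  simp only [Kr, shiftMatrix, kroneckerMap_apply, of_apply, Jmat_pow_apply, ZMod.natCast_val,
    ZMod.cast_id', id_eq, ite_zero_mul_ite_zero, mul_one, Prod.mk_add_mk, Prod.ext_iff]

theorem LStar_eq_shiftGenerator (p q : ℕ) [NeZero p] [NeZero q] (α : ZMod p × ZMod q → ℝ) :
    LStar p q α = shiftGenerator α := by
  ext1 x
  simp only [LStar, Kr_eq_shiftMatrix]
  rfl

theorem stmt17_general (p q : ℕ) [NeZero p] [NeZero q]
    (α : ZMod p × ZMod q → ℝ) (hα : ∀ ij, 0 ≤ α ij)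
    (hsum : ∑ ij : ZMod p × ZMod q, α ij = 1)
    (hgen : AddSubgroup.closure {ij : ZMod p × ZMod q | 0 < α ij} = ⊤) :
    ∀ ρ : Matrix (ZMod p × ZMod q) (ZMod p × ZMod q) ℂ,
      (LStar p q α ρ = 0 ↔
        ρ ∈ Submodule.span ℂ
          (Set.range fun ij : ZMod p × ZMod q => Kr p q ij.1 ij.2)) ∧
      (LStar p q α ρ = 0 → Matrix.trace ρ = 1 →
        ∃ c : ZMod p × ZMod q → ℂ,
          ρ = ∑ ij : ZMod p × ZMod q, c ij • Kr p q ij.1 ij.2 ∧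
          c (0, 0) = 1 / ((p : ℂ) * q)) := by
  intro ρ
  simp only [LStar_eq_shiftGenerator, Kr_eq_shiftMatrix, Prod.mk.eta,
    shiftGenerator_eq_zero_iff hα hsum hgen]
  refine ⟨mem_span_shiftMatrix_iff.symm, fun hρ htr =>
    ⟨fun ij => ρ 0 ij, eq_sum_smul_shiftMatrix hρ, ?_⟩⟩
  have htrace := trace_eq_card_mul_apply_zero_zero hρ
  rw [htr, Fintype.card_prod, ZMod.card, ZMod.card, Nat.cast_mul] at htrace
  rw [eq_div_iff (by simp [NeZero.ne p, NeZero.ne q])]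
  linear_combination -htrace

theorem stmt17 (p q : ℕ) [NeZero p] [NeZero q]
    (α : ZMod p × ZMod q → ℝ) (hα : ∀ ij, 0 ≤ α ij)
    (hsum : ∑ ij : ZMod p × ZMod q, α ij = 1) (h0 : α (0, 0) = 0)
    (hgen : AddSubgroup.closure {ij : ZMod p × ZMod q | 0 < α ij} = ⊤) :
    ∀ ρ : Matrix (ZMod p × ZMod q) (ZMod p × ZMod q) ℂ,
      (LStar p q α ρ = 0 ↔
        ρ ∈ Submodule.span ℂ
          (Set.range fun ij : ZMod p × ZMod q => Kr p q ij.1 ij.2)) ∧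
      (LStar p q α ρ = 0 → Matrix.trace ρ = 1 →
        ∃ c : ZMod p × ZMod q → ℂ,
          ρ = ∑ ij : ZMod p × ZMod q, c ij • Kr p q ij.1 ij.2 ∧
          c (0, 0) = 1 / ((p : ℂ) * q)) :=
  stmt17_general p q α hα hsum hgen
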